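/- arXiv:1202.0504 — 2 statements merged into one kernel-verified Lean document; each statement's English description precedes it below -/
import Mathlib

section
/- Let φ ∈ (0, 2π). Then there exists a constant c(φ) > 0 such that for all ξ, η, ζ ∈ (0, 1], setting x = (ξ, 0), y = (η, 0) and z = ζ·(cos φ, sin φ) in ℝ², one has κ(x, y, z) ≤ c(φ) · 2ζ / ((ξ² + ζ²)^{1/2} · (η² + ζ²)^{1/2}). -/
/-! The line through `x = (ξ, 0)` and `y = (η, 0)` is the horizontal axis, so
`dist(z, L_{x,y}) ≤ ζ |sin φ| ≤ ζ`. By the law of cosines,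
`|(a, 0) - ζ (cos φ, sin φ)|² = a² - 2aζ cos φ + ζ² ≥ (1 - max(cos φ, 0)) (a² + ζ²)`,
and `1 - max(cos φ, 0) > 0` because `φ ∉ 2πℤ`; hence `c(φ) = 1 / (1 - max(cos φ, 0))` works. -/

open MeasureTheory Real
open scoped ENNReal NNReal Classical

/-- The Menger curvature of three points in `ℝⁿ`: the reciprocal of the circumradius,
`κ(x,y,z) = 2 dist(z, L_{x,y}) / (|x-z| |y-z|)` for pairwise distinct non-collinear points,
and `0` otherwise. -/
noncomputable def menger {n : ℕ} (x y z : EuclideanSpace ℝ (Fin n)) : ℝ :=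
  if x ≠ y ∧ y ≠ z ∧ x ≠ z ∧ ¬ Collinear ℝ ({x, y, z} : Set (EuclideanSpace ℝ (Fin n)))
  then 2 * Metric.infDist z (affineSpan ℝ ({x, y} : Set (EuclideanSpace ℝ (Fin n))) :
      Set (EuclideanSpace ℝ (Fin n))) / (dist x z * dist y z)
  else 0

/-- The point `(a, b) ∈ ℝ²` (with the Euclidean metric). -/
noncomputable def pt (a b : ℝ) : EuclideanSpace ℝ (Fin 2) :=
  (WithLp.equiv 2 (Fin 2 → ℝ)).symm ![a, b]

lemma pt_apply (a b : ℝ) (i : Fin 2) : pt a b i = ![a, b] i := rfl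

lemma smul_pt (r a b : ℝ) : r • pt a b = pt (r * a) (r * b) := by
  ext i; fin_cases i <;> simp [pt_apply]

lemma dist_pt (a b c d : ℝ) : dist (pt a b) (pt c d) = √((a - c) ^ 2 + (b - d) ^ 2) := by
  simp [EuclideanSpace.dist_eq, pt_apply, Fin.sum_univ_two, Real.dist_eq, sq_abs]

lemma pt_mem_affineSpan_pair {a b : ℝ} (hab : a ≠ b) (u : ℝ) :
    pt u 0 ∈ affineSpan ℝ {pt a 0, pt b 0} := by
  have hline : AffineMap.lineMap (pt a 0) (pt b 0) ((u - a) / (b - a)) = pt u 0 := by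
    have : b - a ≠ 0 := sub_ne_zero.2 hab.symm
    ext i; fin_cases i <;> simp [pt_apply, AffineMap.lineMap_apply_module]; field_simp; ring
  exact hline ▸ AffineMap.lineMap_mem_affineSpan_pair _ _ _

lemma infDist_pt_affineSpan_pair_le {a b : ℝ} (hab : a ≠ b) (u v : ℝ) :
    Metric.infDist (pt u v) (affineSpan ℝ {pt a 0, pt b 0}) ≤ |v| := by
  calc Metric.infDist (pt u v) (affineSpan ℝ {pt a 0, pt b 0})
      ≤ dist (pt u v) (pt u 0) := Metric.infDist_le_dist_of_mem (pt_mem_affineSpan_pair hab u)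
    _ = |v| := by simp [dist_pt, Real.sqrt_sq_eq_abs]

lemma one_sub_max_mul_sq_add_sq_le (a b t : ℝ) (ha : 0 ≤ a) (hb : 0 ≤ b) :
    (1 - max t 0) * (a ^ 2 + b ^ 2) ≤ a ^ 2 - 2 * t * a * b + b ^ 2 := by
  have hab : 2 * a * b ≤ a ^ 2 + b ^ 2 := by nlinarith [sq_nonneg (a - b)]
  rcases le_total t 0 with ht | ht
  · rw [max_eq_right ht]; nlinarith [mul_nonneg ha hb]
  · rw [max_eq_left ht]; nlinarith

lemma sqrt_mul_le_dist_pt_polar (φ : ℝ) {a r : ℝ} (ha : 0 ≤ a) (hr : 0 ≤ r) :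
    √(1 - max (cos φ) 0) * √(a ^ 2 + r ^ 2) ≤ dist (pt a 0) (r • pt (cos φ) (sin φ)) := by
  rw [smul_pt, dist_pt, ← Real.sqrt_mul' _ (by positivity)]
  refine Real.sqrt_le_sqrt ?_
  have := one_sub_max_mul_sq_add_sq_le a r (cos φ) ha hr
  nlinarith [sin_sq_add_cos_sq φ]

lemma menger_le_of_le {n : ℕ} {x y z : EuclideanSpace ℝ (Fin n)} {h a b : ℝ}
    (hh : 0 ≤ h) (ha : 0 < a) (hb : 0 < b) (hxz : a ≤ dist x z) (hyz : b ≤ dist y z)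
    (hd : x ≠ y → Metric.infDist z (affineSpan ℝ {x, y} : Set (EuclideanSpace ℝ (Fin n))) ≤ h) :
    menger x y z ≤ 2 * h / (a * b) := by
  unfold menger
  split_ifs with hgen
  · exact div_le_div₀ (by positivity) (by linarith [hd hgen.1]) (by positivity)
      (mul_le_mul hxz hyz hb.le (ha.le.trans hxz))
  · positivity

lemma cos_lt_one_of_mem_Ioo {φ : ℝ} (hφ : φ ∈ Set.Ioo 0 (2 * π)) : cos φ < 1 :=
  (cos_le_one φ).lt_of_ne fun h =>
    hφ.1.ne' ((cos_eq_one_iff_of_lt_of_lt (by linarith [hφ.1, pi_pos]) hφ.2).1 h)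

/-- Estimate of `κ` for points on the two arms of `E_φ`. -/
theorem menger_corner_estimate (φ : ℝ) (hφ : φ ∈ Set.Ioo 0 (2 * π)) :
    ∃ c : ℝ, 0 < c ∧ ∀ ξ ∈ Set.Ioc (0:ℝ) 1, ∀ η ∈ Set.Ioc (0:ℝ) 1, ∀ ζ ∈ Set.Ioc (0:ℝ) 1,
      menger (pt ξ 0) (pt η 0) (ζ • pt (Real.cos φ) (Real.sin φ)) ≤
        c * (2 * ζ / (Real.sqrt (ξ ^ 2 + ζ ^ 2) * Real.sqrt (η ^ 2 + ζ ^ 2))) := by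
  set K := 1 - max (cos φ) 0
  have hK : 0 < K := sub_pos.2 (max_lt (cos_lt_one_of_mem_Ioo hφ) one_pos)
  refine ⟨1 / K, by positivity, ?_⟩
  rintro ξ ⟨hξ, -⟩ η ⟨hη, -⟩ ζ ⟨hζ, -⟩
  have hz : ζ • pt (cos φ) (sin φ) = pt (ζ * cos φ) (ζ * sin φ) := smul_pt _ _ _
  have hdist : ∀ a : ℝ, 0 < a → 0 < √K * √(a ^ 2 + ζ ^ 2) := fun a ha => by positivity
  calc menger (pt ξ 0) (pt η 0) (ζ • pt (cos φ) (sin φ))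
      ≤ 2 * ζ / ((√K * √(ξ ^ 2 + ζ ^ 2)) * (√K * √(η ^ 2 + ζ ^ 2))) := by
        refine menger_le_of_le hζ.le (hdist ξ hξ) (hdist η hη)
          (sqrt_mul_le_dist_pt_polar φ hξ.le hζ.le) (sqrt_mul_le_dist_pt_polar φ hη.le hζ.le) ?_
        intro hne
        rw [hz]
        refine (infDist_pt_affineSpan_pair_le (fun h => hne (by rw [h])) _ _).trans ?_
        rw [abs_mul, abs_of_pos hζ]
        exact mul_le_of_le_one_right hζ.le (abs_sin_le_one φ)
    _ = 1 / K * (2 * ζ / (√(ξ ^ 2 + ζ ^ 2) * √(η ^ 2 + ζ ^ 2))) := by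
        rw [mul_mul_mul_comm, Real.mul_self_sqrt hK.le]
        field_simp
end

section
/- For p ∈ (0, ∞), the global curvature energy of E_{π/2} is finite if and only if p ∈ (0, 1); that is, U_p(E_{π/2}) < ∞ ⟺ 0 < p < 1. -/
open MeasureTheory Real
open scoped ENNReal NNReal Classical

/-- The one-corner set `E_φ = ([0,1) × {0}) ∪ [0,1)·(cos φ, sin φ)`. -/
noncomputable def Eset (φ : ℝ) : Set (EuclideanSpace ℝ (Fin 2)) :=
  {x | ∃ t ∈ Set.Ico (0:ℝ) 1, x = pt t 0} ∪
    {x | ∃ t ∈ Set.Ico (0:ℝ) 1, x = t • pt (Real.cos φ) (Real.sin φ)}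

/-- Integral Menger curvature `M_p(X)` (innermost integration in `x`). -/
noncomputable def Mp (p : ℝ) (X : Set (EuclideanSpace ℝ (Fin 2))) : ℝ≥0∞ :=
  ∫⁻ z in X, ∫⁻ y in X, ∫⁻ x in X,
    (ENNReal.ofReal (menger x y z)) ^ p ∂μH[1] ∂μH[1] ∂μH[1]

/-- Intermediate energy `I_p(X)`. -/
noncomputable def Ip (p : ℝ) (X : Set (EuclideanSpace ℝ (Fin 2))) : ℝ≥0∞ :=
  ∫⁻ y in X, ∫⁻ x in X,
    (⨆ z ∈ X, ENNReal.ofReal (menger x y z)) ^ p ∂μH[1] ∂μH[1]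

/-- Global curvature energy `U_p(X)`. -/
noncomputable def Up (p : ℝ) (X : Set (EuclideanSpace ℝ (Fin 2))) : ℝ≥0∞ :=
  ∫⁻ x in X, (⨆ y ∈ X, ⨆ z ∈ X, ENNReal.ofReal (menger x y z)) ^ p ∂μH[1]

/-!
At the point `x` at distance `t` from the corner on one arm of `E_{π/2}`, the global curvature
is comparable to `1/t`. From below: the right isosceles triangle formed by `x`, the corner and
the point at distance `t` on the other arm has curvature at least `1/t`. From above:
`κ(x, y, z) ≤ 2 / min(|x - y|, |x - z|)` for every triangle (the distance from `z` to the line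
`xy` is at most `|x - z| |y - z| / |x - y|`), triangles with `y, z` on the arm of `x` are
degenerate, and every point of the other arm is at distance at least `t` from `x`.
Hence `U_p(E_{π/2})` is comparable to `∫₀¹ t^(-p) dt`, which is finite iff `p < 1`.
-/

open Metric

local notation "e" => EuclideanSpace.single (𝕜 := ℝ)

section InnerProductSpace

variable {E : Type*} [NormedAddCommGroup E] [InnerProductSpace ℝ E]

theorem norm_sub_orthogonal_proj_mul_norm_le (a b : E) :
    ‖a - (inner ℝ a b / ‖b‖ ^ 2) • b‖ * ‖b‖ ≤ ‖a‖ * ‖b - a‖ := by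
  rcases eq_or_ne b 0 with rfl | hb
  · simp only [norm_zero, mul_zero, zero_sub, norm_neg]
    positivity
  -- `r • b` is the orthogonal projection of `a` onto `ℝ b`; after squaring, the claim reads
  -- `0 ≤ (‖a‖ ^ 2 - ⟪a, b⟫) ^ 2`.
  set r := inner ℝ a b / ‖b‖ ^ 2
  have hr : r * ‖b‖ ^ 2 = inner ℝ a b :=
    div_mul_cancel₀ _ (pow_ne_zero 2 (norm_ne_zero_iff.mpr hb))
  have hr2 : (r * ‖b‖ ^ 2) ^ 2 = inner ℝ a b ^ 2 := by rw [hr]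
  rw [← pow_le_pow_iff_left₀ (by positivity) (by positivity) two_ne_zero, mul_pow, mul_pow,
    norm_sub_sq_real, norm_sub_sq_real, norm_smul, inner_smul_right, real_inner_comm a b,
    Real.norm_eq_abs, mul_pow, sq_abs]
  nlinarith [sq_nonneg (‖a‖ ^ 2 - inner ℝ a b)]

theorem infDist_affineSpan_pair_mul_dist_le (x y z : E) :
    infDist z (line[ℝ, x, y] : Set E) * dist x y ≤ dist x z * dist y z := by
  have hmem := AffineMap.lineMap_mem_affineSpan_pair (inner ℝ (z - x) (y - x) / ‖y - x‖ ^ 2) x y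
  calc infDist z (line[ℝ, x, y] : Set E) * dist x y
      ≤ dist z (AffineMap.lineMap x y (inner ℝ (z - x) (y - x) / ‖y - x‖ ^ 2)) * ‖y - x‖ := by
        rw [dist_comm, dist_eq_norm]
        gcongr
        exact infDist_le_dist_of_mem hmem
    _ ≤ ‖z - x‖ * ‖(y - x) - (z - x)‖ := by
        rw [AffineMap.lineMap_apply_module', dist_eq_norm, sub_add_eq_sub_sub_swap]
        exact norm_sub_orthogonal_proj_mul_norm_le _ _
    _ = dist x z * dist y z := by
        rw [sub_sub_sub_cancel_right, dist_comm x z, dist_eq_norm, dist_eq_norm]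

end InnerProductSpace

section Menger

variable {n : ℕ} {x y z : EuclideanSpace ℝ (Fin n)}

theorem menger_eq_zero_of_collinear (h : Collinear ℝ {x, y, z}) : menger x y z = 0 := by
  simp [menger, h]

theorem menger_eq_of_ne (hxy : x ≠ y) :
    menger x y z = 2 * infDist z (line[ℝ, x, y] : Set _) / (dist x z * dist y z) := by
  unfold menger
  split_ifs with h
  · rfl
  have hz : z ∈ line[ℝ, x, y] := by
    by_cases hyz : y = z
    · exact hyz ▸ right_mem_affineSpan_pair ℝ x y
    by_cases hxz : x = z
    · exact hxz ▸ left_mem_affineSpan_pair ℝ x y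
    have hcol : Collinear ℝ {x, y, z} := by tauto
    exact hcol.mem_affineSpan_of_mem_of_ne (by simp) (by simp) (by simp) hxy
  rw [infDist_zero_of_mem hz, mul_zero, zero_div]

theorem menger_le_two_div_dist_left : menger x y z ≤ 2 / dist x y := by
  rcases eq_or_ne x y with rfl | hxy
  · simp [menger]
  rw [menger_eq_of_ne hxy]
  rcases eq_or_ne (dist x z * dist y z) 0 with h | h
  · rw [h, div_zero]
    positivity
  rw [div_le_div_iff₀ (lt_of_le_of_ne (by positivity) h.symm) (dist_pos.mpr hxy), mul_assoc]
  exact mul_le_mul_of_nonneg_left (infDist_affineSpan_pair_mul_dist_le x y z) zero_le_two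

theorem menger_le_two_div_dist_right : menger x y z ≤ 2 / dist x z := by
  unfold menger
  split_ifs with h
  · obtain ⟨-, hyz, hxz, -⟩ := h
    have hxz := dist_pos.mpr hxz
    rw [div_le_div_iff₀ (mul_pos hxz (dist_pos.mpr hyz)) hxz, mul_assoc, mul_comm (dist x z)]
    gcongr
    rw [dist_comm y z]
    exact infDist_le_dist_of_mem (right_mem_affineSpan_pair ℝ x y)
  · positivity

theorem menger_le_two_div_of_mem_or_le_dist {ℓ : Set (EuclideanSpace ℝ (Fin n))}
    (hℓ : Collinear ℝ ℓ) (hx : x ∈ ℓ) {r : ℝ} (hr : 0 < r) (hy : y ∈ ℓ ∨ r ≤ dist x y)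
    (hz : z ∈ ℓ ∨ r ≤ dist x z) :
    menger x y z ≤ 2 / r := by
  rcases hy with hy | hy
  · rcases hz with hz | hz
    · rw [menger_eq_zero_of_collinear (hℓ.subset (by simp [Set.insert_subset_iff, *]))]
      positivity
    · exact menger_le_two_div_dist_right.trans (div_le_div_of_nonneg_left zero_le_two hr hz)
  · exact menger_le_two_div_dist_left.trans (div_le_div_of_nonneg_left zero_le_two hr hy)

end Menger

section Axes

variable {n : ℕ} {i j : Fin n}

theorem collinear_range_single (i : Fin n) : Collinear ℝ (Set.range (e i)) := by
  rw [collinear_iff_exists_forall_eq_smul_vadd]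
  refine ⟨0, e i 1, ?_⟩
  rintro _ ⟨t, rfl⟩
  exact ⟨t, by ext k; simp⟩

theorem isometry_single (i : Fin n) : Isometry (e i) :=
  Isometry.of_dist_eq fun _ _ => by simp

theorem abs_le_dist_single_single (hij : i ≠ j) (t s : ℝ) : |t| ≤ dist (e i t) (e j s) := by
  simpa [Real.dist_eq, hij] using PiLp.dist_apply_le (e i t) (e j s) i

theorem one_div_le_menger_single (hij : i ≠ j) {t : ℝ} (ht : 0 < t) :
    1 / t ≤ menger (e i t) 0 (e j t) := by
  have hne : e i t ≠ 0 := by simpa using ht.ne'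
  have hinf : t ≤ infDist (e j t) (line[ℝ, e i t, 0] : Set _) := by
    rw [le_infDist ⟨_, left_mem_affineSpan_pair ℝ _ _⟩]
    intro w hw
    obtain ⟨r, rfl⟩ := mem_affineSpan_pair_iff_exists_lineMap_eq.mp hw
    simpa [Real.dist_eq, abs_of_pos ht, AffineMap.lineMap_apply_module', hij.symm]
      using PiLp.dist_apply_le (e j t) (AffineMap.lineMap (e i t) 0 r) j
  have hxz : dist (e i t) (e j t) ≤ 2 * t := by
    calc dist (e i t) (e j t) ≤ dist (e i t) 0 + dist 0 (e j t) := dist_triangle _ _ _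
      _ = 2 * t := by simp [abs_of_pos ht]; ring
  have hxz_pos : 0 < dist (e i t) (e j t) :=
    ht.trans_le ((abs_of_pos ht).symm.trans_le (abs_le_dist_single_single hij t t))
  have hyz : dist (0 : EuclideanSpace ℝ (Fin n)) (e j t) = t := by simp [abs_of_pos ht]
  rw [menger_eq_of_ne hne, hyz, div_le_div_iff₀ ht (by positivity)]
  nlinarith

end Axes

theorem Eset_pi_div_two : Eset (π / 2) = ⋃ i : Fin 2, e i '' Set.Ico 0 1 := by
  have h0 (t : ℝ) : pt t 0 = e 0 t := by ext k; fin_cases k <;> simp [pt]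
  have h1 (t : ℝ) : t • pt 0 1 = e 1 t := by ext k; fin_cases k <;> simp [pt]
  ext v
  simp [Eset, Fin.exists_fin_two, h0, h1, eq_comm]

theorem mem_range_single_or_le_dist_of_mem_Eset {v : EuclideanSpace ℝ (Fin 2)}
    (hv : v ∈ Eset (π / 2)) (i : Fin 2) {t : ℝ} (ht : 0 < t) :
    v ∈ Set.range (e i) ∨ t ≤ dist (e i t) v := by
  rw [Eset_pi_div_two] at hv
  obtain ⟨k, s, -, rfl⟩ := Set.mem_iUnion.mp hv
  rcases eq_or_ne i k with rfl | hik
  · exact Or.inl ⟨s, rfl⟩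
  · exact Or.inr ((abs_of_pos ht).symm.trans_le (abs_le_dist_single_single hik t s))

noncomputable def globalCurvature {n : ℕ} (X : Set (EuclideanSpace ℝ (Fin n)))
    (x : EuclideanSpace ℝ (Fin n)) : ℝ≥0∞ :=
  ⨆ y ∈ X, ⨆ z ∈ X, ENNReal.ofReal (menger x y z)

theorem globalCurvature_Eset_single_le (i : Fin 2) {t : ℝ} (ht : 0 < t) :
    globalCurvature (Eset (π / 2)) (e i t) ≤ ENNReal.ofReal (2 / t) :=
  iSup₂_le fun _ hy => iSup₂_le fun _ hz => ENNReal.ofReal_le_ofReal <|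
    menger_le_two_div_of_mem_or_le_dist (collinear_range_single i) ⟨t, rfl⟩ ht
      (mem_range_single_or_le_dist_of_mem_Eset hy i ht)
      (mem_range_single_or_le_dist_of_mem_Eset hz i ht)

theorem ofReal_one_div_le_globalCurvature_Eset {t : ℝ} (ht : t ∈ Set.Ioo 0 1) :
    ENNReal.ofReal (1 / t) ≤ globalCurvature (Eset (π / 2)) (e 0 t) := by
  have hmem (i : Fin 2) {s : ℝ} (hs : s ∈ Set.Ico (0 : ℝ) 1) : e i s ∈ Eset (π / 2) := by
    rw [Eset_pi_div_two]
    exact Set.mem_iUnion.mpr ⟨i, s, hs, rfl⟩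
  have h0 : e 0 0 = (0 : EuclideanSpace ℝ (Fin 2)) := (PiLp.single_eq_zero_iff 2 0).mpr rfl
  calc ENNReal.ofReal (1 / t) ≤ ENNReal.ofReal (menger (e 0 t) 0 (e 1 t)) :=
        ENNReal.ofReal_le_ofReal (one_div_le_menger_single zero_ne_one ht.1)
    _ ≤ globalCurvature (Eset (π / 2)) (e 0 t) :=
        le_iSup₂_of_le 0 (h0 ▸ hmem 0 ⟨le_rfl, zero_lt_one⟩) <|
          le_iSup₂_of_le (e 1 t) (hmem 1 (Set.Ioo_subset_Ico_self ht)) le_rfl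

theorem Isometry.setLIntegral_image_hausdorffMeasure {X : Type*} [EMetricSpace X]
    [MeasurableSpace X] [BorelSpace X] {f : ℝ → X} (hf : Isometry f) (s : Set ℝ)
    (g : X → ℝ≥0∞) :
    ∫⁻ x in f '' s, g x ∂μH[1] = ∫⁻ t in s, g (f t) := by
  have hemb : MeasurableEmbedding f := hf.isClosedEmbedding.measurableEmbedding
  have hrestrict : (μH[1] : Measure X).restrict (f '' s) = Measure.map f (volume.restrict s) := by
    ext u hu
    rw [Measure.restrict_apply hu, Measure.map_apply hemb.measurable hu,
      Measure.restrict_apply (hemb.measurable hu), Set.inter_comm u, Set.inter_comm (f ⁻¹' u),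
      ← Set.image_inter_preimage, hf.hausdorffMeasure_image (Or.inl zero_le_one),
      hausdorffMeasure_real]
  rw [hrestrict, hemb.lintegral_map]

theorem lintegral_Ioo_ofReal_div_rpow_lt_top_iff {c : ℝ} (hc : 0 < c) (p : ℝ) :
    ∫⁻ t in Set.Ioo 0 1, ENNReal.ofReal (c / t) ^ p < ∞ ↔ p < 1 := by
  have hpow : ∀ t ∈ Set.Ioo (0 : ℝ) 1,
      ENNReal.ofReal (c / t) ^ p = ENNReal.ofReal (c ^ p * t ^ (-p)) := fun t ht => by
    rw [ENNReal.ofReal_rpow_of_pos (div_pos hc ht.1), div_rpow hc.le ht.1.le, rpow_neg ht.1.le,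
      div_eq_mul_inv]
  rw [setLIntegral_congr_fun measurableSet_Ioo hpow, lt_top_iff_ne_top,
    lintegral_ofReal_ne_top_iff_integrable (by fun_prop) ?_,
    integrable_const_mul_iff (rpow_pos_of_pos hc p).ne'.isUnit,
    ← IntegrableOn, intervalIntegral.integrableOn_Ioo_rpow_iff one_pos, neg_lt_neg_iff]
  exact (ae_restrict_iff' measurableSet_Ioo).mpr (ae_of_all _ fun t ht => by
    have := ht.1; positivity)

theorem lintegral_Ioo_le_Up_Eset {p : ℝ} (hp : 0 ≤ p) :
    ∫⁻ t in Set.Ioo 0 1, ENNReal.ofReal (1 / t) ^ p ≤ Up p (Eset (π / 2)) :=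
  calc ∫⁻ t in Set.Ioo 0 1, ENNReal.ofReal (1 / t) ^ p
      ≤ ∫⁻ t in Set.Ioo 0 1, globalCurvature (Eset (π / 2)) (e 0 t) ^ p :=
        setLIntegral_mono' measurableSet_Ioo fun t ht =>
          ENNReal.rpow_le_rpow (ofReal_one_div_le_globalCurvature_Eset ht) hp
    _ = ∫⁻ x in e 0 '' Set.Ioo 0 1, globalCurvature (Eset (π / 2)) x ^ p ∂μH[1] := by
        rw [(isometry_single 0).setLIntegral_image_hausdorffMeasure]
    _ ≤ Up p (Eset (π / 2)) := by
        refine lintegral_mono_set ?_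
        rw [Eset_pi_div_two]
        exact (Set.image_mono Set.Ioo_subset_Ico_self).trans (Set.subset_iUnion_of_subset 0 le_rfl)

theorem Up_Eset_le {p : ℝ} (hp : 0 ≤ p) :
    Up p (Eset (π / 2)) ≤ 2 * ∫⁻ t in Set.Ioo 0 1, ENNReal.ofReal (2 / t) ^ p := by
  have harm (i : Fin 2) : ∫⁻ x in e i '' Set.Ico 0 1, globalCurvature (Eset (π / 2)) x ^ p ∂μH[1]
      ≤ ∫⁻ t in Set.Ioo 0 1, ENNReal.ofReal (2 / t) ^ p := by
    rw [(isometry_single i).setLIntegral_image_hausdorffMeasure,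
      ← Measure.restrict_congr_set Ioo_ae_eq_Ico]
    exact setLIntegral_mono' measurableSet_Ioo fun t ht =>
      ENNReal.rpow_le_rpow (globalCurvature_Eset_single_le i ht.1) hp
  calc Up p (Eset (π / 2))
      ≤ ∑ i : Fin 2, ∫⁻ x in e i '' Set.Ico 0 1, globalCurvature (Eset (π / 2)) x ^ p ∂μH[1] := by
        rw [Up, Eset_pi_div_two]
        exact (lintegral_iUnion_le _ _).trans_eq (tsum_fintype _)
    _ ≤ 2 * ∫⁻ t in Set.Ioo 0 1, ENNReal.ofReal (2 / t) ^ p := by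
        simpa [Fin.sum_univ_two, two_mul] using add_le_add (harm 0) (harm 1)

/-- `U_p(E_{π/2}) < ∞` if and only if `p ∈ (0,1)`. -/
theorem Up_Eset_pi_div_two_lt_top_iff (p : ℝ) (hp : 0 < p) :
    Up p (Eset (π / 2)) < ⊤ ↔ p ∈ Set.Ioo (0:ℝ) 1 := by
  constructor
  · intro hfin
    refine ⟨hp, (lintegral_Ioo_ofReal_div_rpow_lt_top_iff one_pos p).mp ?_⟩
    exact (lintegral_Ioo_le_Up_Eset hp.le).trans_lt hfin
  · rintro ⟨-, hp1⟩
    exact (Up_Eset_le hp.le).trans_lt <| ENNReal.mul_lt_top ENNReal.ofNat_lt_top <|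
      (lintegral_Ioo_ofReal_div_rpow_lt_top_iff two_pos p).mpr hp1
end
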